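/- arXiv:1002.1495 — 4 statements merged into one kernel-verified Lean document; each statement's English description precedes it below -/
import Mathlib

section
/- Min-Entropy-Splitting Lemma (non-smooth case): Let X0, X1 and Z be finite random variables with H_min(X0 X1 | Z) >= α, i.e. sum_z max_{x0,x1} P[X0=x0, X1=x1, Z=z] <= 2^{-α}. Then there exists a {0,1}-valued random variable D (a deterministic function of X0 and Z) such that H_min(X_D | D, Z) >= α/2 - 1, i.e. sum_{d,z} max_x P[X_D = x, D = d, Z = z] <= 2·2^{-α/2}. -/
open Finset Real

/-!
Take the threshold `β = 2^(-α/2)` and let `D = 1` exactly when `x₀` is heavy for `z`, i.e.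
`P[X0 = x₀, Z = z] ≥ β P[Z = z]`. On `D = 0` the output `X_D = X0` equals any given `x` with
probability below `β P[Z = z]`, which sums to `β` over `z`. On `D = 1` the heavy values `x₀` number
at most `β⁻¹` for each `z` (Markov), so `P[X1 = x, D = 1, Z = z]` is at most `β⁻¹` times the best
guess of the pair `(X0, X1)`; summing over `z` gives `β⁻¹ 2^(-α) = β`.
-/

section Weight

variable {Ω : Type*} [Fintype Ω]

def weight (μ : Ω → ℝ) (p : Ω → Prop) [DecidablePred p] : ℝ :=
  ∑ ω, if p ω then μ ω else 0

variable {μ : Ω → ℝ}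

lemma weight_nonneg (hμ : ∀ ω, 0 ≤ μ ω) (p : Ω → Prop) [DecidablePred p] : 0 ≤ weight μ p :=
  sum_nonneg fun ω _ => by split_ifs <;> simp [hμ ω]

lemma weight_mono (hμ : ∀ ω, 0 ≤ μ ω) {p q : Ω → Prop} [DecidablePred p] [DecidablePred q]
    (h : ∀ ω, p ω → q ω) : weight μ p ≤ weight μ q :=
  sum_le_sum fun ω _ => by
    by_cases hp : p ω
    · simp [hp, h ω hp]
    · by_cases hq : q ω <;> simp [hp, hq, hμ ω]

lemma weight_congr {p q : Ω → Prop} [DecidablePred p] [DecidablePred q] (h : ∀ ω, p ω ↔ q ω) :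
    weight μ p = weight μ q :=
  sum_congr rfl fun ω _ => if_congr (h ω) rfl rfl

lemma weight_eq_zero {p : Ω → Prop} [DecidablePred p] (h : ∀ ω, ¬ p ω) : weight μ p = 0 :=
  sum_eq_zero fun ω _ => if_neg (h ω)

lemma sum_weight_fiber {ι : Type*} [DecidableEq ι] (g : Ω → ι) (p : Ω → Prop) [DecidablePred p]
    (T : Finset ι) :
    ∑ a ∈ T, weight μ (fun ω => g ω = a ∧ p ω) = weight μ (fun ω => g ω ∈ T ∧ p ω) := by
  unfold weight
  rw [sum_comm]
  refine sum_congr rfl fun ω _ => ?_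
  simp_rw [ite_and, sum_ite_eq]

lemma sum_weight_fiber_univ {ι : Type*} [Fintype ι] [DecidableEq ι] (g : Ω → ι) (p : Ω → Prop)
    [DecidablePred p] : ∑ a, weight μ (fun ω => g ω = a ∧ p ω) = weight μ p := by
  rw [sum_weight_fiber]
  exact weight_congr fun ω => by simp

lemma sum_weight_eq_sum {ι : Type*} [Fintype ι] [DecidableEq ι] (g : Ω → ι) :
    ∑ a, weight μ (fun ω => g ω = a) = ∑ ω, μ ω := by
  unfold weight
  rw [sum_comm]
  simp

end Weight

lemma card_filter_le_inv_of_sum_le {ι : Type*} [Fintype ι] {q : ι → ℝ} {s β : ℝ} (hs : 0 < s)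
    (hβ : 0 < β) (hq : ∀ a, 0 ≤ q a) (hsum : ∑ a, q a ≤ s) :
    (#{a | β * s ≤ q a} : ℝ) ≤ β⁻¹ := by
  have hcard : (#{a | β * s ≤ q a} : ℝ) * (β * s) ≤ s :=
    calc (#{a | β * s ≤ q a} : ℝ) * (β * s) ≤ ∑ a ∈ {a | β * s ≤ q a}, q a := by
          simpa using card_nsmul_le_sum _ q (β * s) fun a ha => (mem_filter.1 ha).2
      _ ≤ ∑ a, q a := sum_le_sum_of_subset_of_nonneg (subset_univ _) fun a _ _ => hq a
      _ ≤ s := hsum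
  rw [← one_div, le_div_iff₀ hβ]
  nlinarith

lemma rpow_neg_half_inv_mul_rpow_neg (α : ℝ) :
    ((2 : ℝ) ^ (-α / 2))⁻¹ * (2 : ℝ) ^ (-α) = (2 : ℝ) ^ (-α / 2) := by
  rw [← rpow_neg (by norm_num), ← rpow_add (by norm_num)]
  ring_nf

section Splitting

variable {Ω 𝒳 𝒵 : Type*} [Fintype Ω] [DecidableEq 𝒳] [DecidableEq 𝒵]
  {μ : Ω → ℝ} (X0 X1 : Ω → 𝒳) (Z : Ω → 𝒵)

lemma weight_select_zero_le (hμ : ∀ ω, 0 ≤ μ ω) (f : 𝒳 → 𝒵 → Fin 2) (x : 𝒳) (z : 𝒵) {c : ℝ}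
    (hc : 0 ≤ c) (hf : ∀ a, f a z = 0 → weight μ (fun ω => X0 ω = a ∧ Z ω = z) ≤ c) :
    weight μ (fun ω => (if f (X0 ω) (Z ω) = 0 then X0 ω else X1 ω) = x
      ∧ f (X0 ω) (Z ω) = 0 ∧ Z ω = z) ≤ c := by
  by_cases hx : f x z = 0
  · refine (weight_mono hμ ?_).trans (hf x hx)
    rintro ω ⟨hsel, hd, rfl⟩
    rw [if_pos hd] at hsel
    exact ⟨hsel, rfl⟩
  · rw [weight_eq_zero]
    · exact hc
    rintro ω ⟨hsel, hd, rfl⟩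
    rw [if_pos hd] at hsel
    exact hx (hsel ▸ hd)

lemma weight_select_one_eq_sum [Fintype 𝒳] (f : 𝒳 → 𝒵 → Fin 2) (x : 𝒳) (z : 𝒵) :
    weight μ (fun ω => (if f (X0 ω) (Z ω) = 0 then X0 ω else X1 ω) = x
      ∧ f (X0 ω) (Z ω) = 1 ∧ Z ω = z)
      = ∑ a ∈ {a | f a z = 1}, weight μ (fun ω => X0 ω = a ∧ X1 ω = x ∧ Z ω = z) := by
  rw [sum_weight_fiber]
  refine weight_congr fun ω => ?_
  constructor
  · rintro ⟨hsel, hd, rfl⟩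
    rw [if_neg (by simp [hd])] at hsel
    exact ⟨by simpa using hd, hsel, rfl⟩
  · rintro ⟨hd, hsel, rfl⟩
    rw [mem_filter] at hd
    rw [if_neg (by simp [hd.2])]
    exact ⟨hsel, hd.2, rfl⟩

variable (μ) in
noncomputable def splitDecision (β : ℝ) (a : 𝒳) (z : 𝒵) : Fin 2 :=
  if weight μ (fun ω => X0 ω = a ∧ Z ω = z) < β * weight μ (fun ω => Z ω = z) then 0 else 1

lemma splitDecision_eq_zero_iff (β : ℝ) (a : 𝒳) (z : 𝒵) :
    splitDecision μ X0 Z β a z = 0 ↔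
      weight μ (fun ω => X0 ω = a ∧ Z ω = z) < β * weight μ (fun ω => Z ω = z) := by
  unfold splitDecision
  split_ifs <;> simp_all

lemma splitDecision_eq_one_iff (β : ℝ) (a : 𝒳) (z : 𝒵) :
    splitDecision μ X0 Z β a z = 1 ↔
      β * weight μ (fun ω => Z ω = z) ≤ weight μ (fun ω => X0 ω = a ∧ Z ω = z) := by
  unfold splitDecision
  split_ifs <;> simp_all

lemma weight_splitDecision_one_le [Fintype 𝒳] [Nonempty 𝒳] (hμ : ∀ ω, 0 ≤ μ ω) {β : ℝ} (hβ : 0 < β)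
    (x : 𝒳) (z : 𝒵) :
    weight μ (fun ω => (if splitDecision μ X0 Z β (X0 ω) (Z ω) = 0 then X0 ω else X1 ω) = x
      ∧ splitDecision μ X0 Z β (X0 ω) (Z ω) = 1 ∧ Z ω = z)
      ≤ β⁻¹ * univ.sup' univ_nonempty
          (fun p : 𝒳 × 𝒳 => weight μ (fun ω => X0 ω = p.1 ∧ X1 ω = p.2 ∧ Z ω = z)) := by
  set m := univ.sup' univ_nonempty
    (fun p : 𝒳 × 𝒳 => weight μ (fun ω => X0 ω = p.1 ∧ X1 ω = p.2 ∧ Z ω = z))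
  have hm : 0 ≤ m := le_sup'_of_le _ (mem_univ (Classical.arbitrary _)) (weight_nonneg hμ _)
  rcases (weight_nonneg hμ (fun ω => Z ω = z)).eq_or_lt with hz | hz
  · calc _ ≤ weight μ (fun ω => Z ω = z) := weight_mono hμ fun ω h => h.2.2
      _ ≤ β⁻¹ * m := hz ▸ mul_nonneg (inv_nonneg.2 hβ.le) hm
  have hheavy : (#{a | splitDecision μ X0 Z β a z = 1} : ℝ) ≤ β⁻¹ := by
    simp_rw [splitDecision_eq_one_iff]
    exact card_filter_le_inv_of_sum_le hz hβ (fun a => weight_nonneg hμ _)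
      (sum_weight_fiber_univ X0 _).le
  rw [weight_select_one_eq_sum]
  calc _ ≤ ∑ a ∈ {a | splitDecision μ X0 Z β a z = 1}, m :=
        sum_le_sum fun a _ => le_sup'_of_le _ (mem_univ (a, x)) le_rfl
    _ = #{a | splitDecision μ X0 Z β a z = 1} * m := by rw [sum_const, nsmul_eq_mul]
    _ ≤ β⁻¹ * m := mul_le_mul_of_nonneg_right hheavy hm

end Splitting

/-- Min-Entropy-Splitting Lemma (non-smooth case).
If `∑ z, max_{x0,x1} P[X0 = x0, X1 = x1, Z = z] ≤ 2^(-α)`, then there is a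
binary random variable `D` that is a deterministic function of `(X0, Z)` such
that `∑ d, ∑ z, max_x P[X_D = x, D = d, Z = z] ≤ 2 * 2^(-α/2)`,
i.e. `H_min(X_D | D, Z) ≥ α/2 - 1`. -/
theorem min_entropy_splitting
    {Ω 𝒳 𝒵 : Type} [Fintype Ω] [Fintype 𝒳] [Fintype 𝒵]
    [DecidableEq 𝒳] [DecidableEq 𝒵] [Nonempty 𝒳]
    (μ : Ω → ℝ) (hμ0 : ∀ ω, 0 ≤ μ ω) (hμ1 : ∑ ω, μ ω = 1)
    (X0 X1 : Ω → 𝒳) (Z : Ω → 𝒵) (α : ℝ)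
    (hα : ∑ z, Finset.univ.sup' Finset.univ_nonempty
        (fun p : 𝒳 × 𝒳 =>
          ∑ ω, if X0 ω = p.1 ∧ X1 ω = p.2 ∧ Z ω = z then μ ω else 0)
      ≤ (2:ℝ) ^ (-α)) :
    ∃ f : 𝒳 → 𝒵 → Fin 2,
      ∑ d : Fin 2, ∑ z, Finset.univ.sup' Finset.univ_nonempty
        (fun x => ∑ ω,
          if (if f (X0 ω) (Z ω) = 0 then X0 ω else X1 ω) = x
              ∧ f (X0 ω) (Z ω) = d ∧ Z ω = z
          then μ ω else 0)
      ≤ 2 * (2:ℝ) ^ (-α/2) := by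
  set β := (2:ℝ) ^ (-α/2)
  have hβ : 0 < β := by positivity
  refine ⟨splitDecision μ X0 Z β, ?_⟩
  rw [Fin.sum_univ_two, two_mul]
  refine add_le_add ?_ ?_
  · calc _ ≤ ∑ z, β * weight μ (fun ω => Z ω = z) :=
          sum_le_sum fun z _ => sup'_le _ _ fun x _ =>
            weight_select_zero_le X0 X1 Z hμ0 _ x z (mul_nonneg hβ.le (weight_nonneg hμ0 _))
              fun a ha => ((splitDecision_eq_zero_iff X0 Z β a z).1 ha).le
      _ = β := by rw [← mul_sum, sum_weight_eq_sum, hμ1, mul_one]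
  · calc _ ≤ ∑ z, β⁻¹ * univ.sup' univ_nonempty
            (fun p : 𝒳 × 𝒳 => weight μ (fun ω => X0 ω = p.1 ∧ X1 ω = p.2 ∧ Z ω = z)) :=
          sum_le_sum fun z _ => sup'_le _ _ fun x _ =>
            weight_splitDecision_one_le X0 X1 Z hμ0 hβ x z
      _ ≤ β⁻¹ * (2:ℝ) ^ (-α) := by rw [← mul_sum]; gcongr; exact hα
      _ = β := rpow_neg_half_inv_mul_rpow_neg α
end

section
/- If sum_z P[Z=z] · max_{x0,x1} P[X0=x0, X1=x1 | Z=z] <= 2^{-α} and D is defined by D=1 iff P[X0=x0|Z=z] >= 2^{-α/2}, then sum_z P[Z=z] · max_{x1} P[X1=x1, D=1 | Z=z] <= 2^{-α/2}. The key combinatorial fact used is: for each z, the number of values x0 with P[X0=x0 | Z=z] >= 2^{-α/2} is at most 2^{α/2}. -/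
/-!
On `Z = z`, `D = 1` means that `X0` lies in the set `S` of `x0` with
`P[X0 = x0 | Z = z] ≥ 2^(-α/2)`. These conditional probabilities sum to `1`, so counting gives
`|S| ≤ 2^(α/2)`. Hence for every `x1`, `P[X1 = x1, X0 ∈ S, Z = z]` is a sum of at most
`2^(α/2)` joint probabilities `P[X0 = x0, X1 = x1, Z = z]`, each bounded by their maximum over
`(x0, x1)`; summing over `z` and using the min-entropy hypothesis gives `2^(α/2) · 2^(-α) = 2^(-α/2)`.
-/

open Finset Real

def prob {Ω : Type*} [Fintype Ω] (μ : Ω → ℝ) (p : Ω → Prop) [DecidablePred p] : ℝ :=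
  ∑ ω, if p ω then μ ω else 0

section prob

variable {Ω : Type*} [Fintype Ω] {μ : Ω → ℝ}

lemma prob_nonneg (hμ : ∀ ω, 0 ≤ μ ω) (p : Ω → Prop) [DecidablePred p] : 0 ≤ prob μ p :=
  sum_nonneg fun ω _ => by split_ifs <;> simp [hμ ω]

lemma prob_mono (hμ : ∀ ω, 0 ≤ μ ω) {p q : Ω → Prop} [DecidablePred p] [DecidablePred q]
    (h : ∀ ω, p ω → q ω) : prob μ p ≤ prob μ q :=
  sum_le_sum fun ω _ => by
    by_cases hp : p ω
    · simp [hp, h ω hp]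
    · by_cases hq : q ω <;> simp [hp, hq, hμ ω]

lemma prob_congr {p q : Ω → Prop} [DecidablePred p] [DecidablePred q] (h : ∀ ω, p ω ↔ q ω) :
    prob μ p = prob μ q :=
  sum_congr rfl fun ω _ => if_congr (h ω) rfl rfl

lemma sum_prob_eq_and {α : Type*} [DecidableEq α] (s : Finset α) (g : Ω → α)
    (p : Ω → Prop) [DecidablePred p] :
    ∑ x ∈ s, prob μ (fun ω => g ω = x ∧ p ω) = prob μ (fun ω => g ω ∈ s ∧ p ω) := by
  unfold prob
  rw [sum_comm]
  refine sum_congr rfl fun ω _ => ?_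
  by_cases hp : p ω <;> simp [hp]

end prob

lemma card_filter_le_inv_of_sum_le_s4 {ι : Type*} (s : Finset ι) (f : ι → ℝ)
    (hf : ∀ i ∈ s, 0 ≤ f i) {c T : ℝ} (hc : 0 < c) (hT : 0 < T) (hsum : ∑ i ∈ s, f i ≤ T) :
    (#{i ∈ s | c * T ≤ f i} : ℝ) ≤ c⁻¹ := by
  have h : (#{i ∈ s | c * T ≤ f i} : ℝ) * c * T ≤ T :=
    calc (#{i ∈ s | c * T ≤ f i} : ℝ) * c * T = #{i ∈ s | c * T ≤ f i} • (c * T) := by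
          rw [nsmul_eq_mul, mul_assoc]
      _ ≤ ∑ i ∈ s with c * T ≤ f i, f i :=
          card_nsmul_le_sum _ _ _ fun i hi => (mem_filter.1 hi).2
      _ ≤ ∑ i ∈ s, f i :=
          sum_le_sum_of_subset_of_nonneg (filter_subset _ _) fun i hi _ => hf i hi
      _ ≤ T := hsum
  rw [inv_eq_one_div, le_div_iff₀ hc]
  exact (mul_le_iff_le_one_left hT).1 h

section splitting

variable {Ω α β 𝒵 : Type*} [Fintype Ω] [Fintype α] [DecidableEq α] [DecidableEq β]
  [DecidableEq 𝒵] {μ : Ω → ℝ} {c : ℝ}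

lemma card_heavy_le (hμ : ∀ ω, 0 ≤ μ ω) (X : Ω → α) (Z : Ω → 𝒵) (hc : 0 < c) {z : 𝒵}
    (hz : 0 < prob μ (fun ω => Z ω = z)) :
    (#{x | c * prob μ (fun ω => Z ω = z) ≤ prob μ (fun ω => X ω = x ∧ Z ω = z)} : ℝ) ≤ c⁻¹ := by
  refine card_filter_le_inv_of_sum_le_s4 _ _ (fun _ _ => prob_nonneg hμ _) hc hz ?_
  rw [sum_prob_eq_and]
  exact (prob_congr fun ω => by simp).le

lemma sup_prob_heavy_le [Fintype β] [Nonempty α] [Nonempty β] (hμ : ∀ ω, 0 ≤ μ ω)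
    (X0 : Ω → α) (X1 : Ω → β) (Z : Ω → 𝒵) (hc : 0 < c) (z : 𝒵) :
    univ.sup' univ_nonempty (fun x1 => prob μ (fun ω => X1 ω = x1
        ∧ c * prob μ (fun ω' => Z ω' = Z ω) ≤ prob μ (fun ω' => X0 ω' = X0 ω ∧ Z ω' = Z ω)
        ∧ Z ω = z))
      ≤ c⁻¹ * univ.sup' univ_nonempty
        (fun p : α × β => prob μ (fun ω => X0 ω = p.1 ∧ X1 ω = p.2 ∧ Z ω = z)) := by
  set f := fun p : α × β => prob μ (fun ω => X0 ω = p.1 ∧ X1 ω = p.2 ∧ Z ω = z)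
  have hle : ∀ p, f p ≤ univ.sup' univ_nonempty f := fun p => le_sup' f (mem_univ p)
  refine sup'_le _ _ fun x1 _ => ?_
  have hM : 0 ≤ univ.sup' univ_nonempty f :=
    (prob_nonneg hμ _).trans (hle (Classical.arbitrary α, x1))
  rcases (prob_nonneg hμ (fun ω => Z ω = z)).eq_or_lt with hz | hz
  · calc _ ≤ prob μ (fun ω => Z ω = z) := prob_mono hμ fun ω h => h.2.2
      _ = 0 := hz.symm
      _ ≤ c⁻¹ * univ.sup' univ_nonempty f := by positivity
  set S : Finset α :=
    {x | c * prob μ (fun ω => Z ω = z) ≤ prob μ (fun ω => X0 ω = x ∧ Z ω = z)}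
  have hD : ∀ ω, (X1 ω = x1
      ∧ c * prob μ (fun ω' => Z ω' = Z ω) ≤ prob μ (fun ω' => X0 ω' = X0 ω ∧ Z ω' = Z ω)
      ∧ Z ω = z) ↔ X0 ω ∈ S ∧ X1 ω = x1 ∧ Z ω = z := by
    intro ω
    constructor
    · rintro ⟨h1, hheavy, rfl⟩
      exact ⟨by simpa [S] using hheavy, h1, rfl⟩
    · rintro ⟨hS, h1, rfl⟩
      exact ⟨h1, by simpa [S] using hS, rfl⟩
  calc _ = prob μ (fun ω => X0 ω ∈ S ∧ X1 ω = x1 ∧ Z ω = z) := prob_congr hD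
    _ = ∑ x0 ∈ S, prob μ (fun ω => X0 ω = x0 ∧ X1 ω = x1 ∧ Z ω = z) :=
        (sum_prob_eq_and _ _ _).symm
    _ ≤ #S • univ.sup' univ_nonempty f := sum_le_card_nsmul _ _ _ fun x0 _ => hle (x0, x1)
    _ ≤ c⁻¹ * univ.sup' univ_nonempty f := by
        rw [nsmul_eq_mul]
        exact mul_le_mul_of_nonneg_right (card_heavy_le hμ X0 Z hc hz) hM

end splitting

theorem splitting_estimate_D1_general
    {Ω 𝒳 𝒵 : Type} [Fintype Ω] [Fintype 𝒳] [Fintype 𝒵]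
    [DecidableEq 𝒳] [DecidableEq 𝒵] [Nonempty 𝒳]
    (μ : Ω → ℝ) (hμ0 : ∀ ω, 0 ≤ μ ω)
    (X0 X1 : Ω → 𝒳) (Z : Ω → 𝒵) (α : ℝ)
    (hα : ∑ z, Finset.univ.sup' Finset.univ_nonempty
        (fun p : 𝒳 × 𝒳 =>
          ∑ ω, if X0 ω = p.1 ∧ X1 ω = p.2 ∧ Z ω = z then μ ω else 0)
      ≤ (2:ℝ) ^ (-α)) :
    (∑ z, Finset.univ.sup' Finset.univ_nonempty
      (fun x1 => ∑ ω,
        if X1 ω = x1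
            ∧ ((2:ℝ) ^ (-α/2) * (∑ ω', if Z ω' = Z ω then μ ω' else 0)
                ≤ ∑ ω', if X0 ω' = X0 ω ∧ Z ω' = Z ω then μ ω' else 0)
            ∧ Z ω = z
        then μ ω else 0)
      ≤ (2:ℝ) ^ (-α/2))
    ∧
    (∀ z : 𝒵, 0 < (∑ ω, if Z ω = z then μ ω else 0) →
      ((Finset.univ.filter (fun x0 : 𝒳 =>
          (2:ℝ) ^ (-α/2) * (∑ ω, if Z ω = z then μ ω else 0)
            ≤ ∑ ω, if X0 ω = x0 ∧ Z ω = z then μ ω else 0)).card : ℝ)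
        ≤ (2:ℝ) ^ (α/2)) := by
  have hc : (0 : ℝ) < 2 ^ (-α / 2) := by positivity
  have hinv : ((2 : ℝ) ^ (-α / 2))⁻¹ = 2 ^ (α / 2) := by
    rw [neg_div, rpow_neg zero_le_two, inv_inv]
  refine ⟨?_, fun z hz => hinv ▸ card_heavy_le hμ0 X0 Z hc hz⟩
  calc _ ≤ ∑ z, (2 : ℝ) ^ (α / 2) * univ.sup' univ_nonempty
          (fun p : 𝒳 × 𝒳 => prob μ (fun ω => X0 ω = p.1 ∧ X1 ω = p.2 ∧ Z ω = z)) :=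
        sum_le_sum fun z _ => hinv ▸ sup_prob_heavy_le hμ0 X0 X1 Z hc z
    _ = 2 ^ (α / 2) * ∑ z, univ.sup' univ_nonempty
          (fun p : 𝒳 × 𝒳 => prob μ (fun ω => X0 ω = p.1 ∧ X1 ω = p.2 ∧ Z ω = z)) :=
        (mul_sum _ _ _).symm
    _ ≤ 2 ^ (α / 2) * 2 ^ (-α) := mul_le_mul_of_nonneg_left hα (by positivity)
    _ = 2 ^ (-α / 2) := by rw [← rpow_add two_pos]; ring_nf

/-- If `∑ z, max_{x0,x1} P[X0 = x0, X1 = x1, Z = z] ≤ 2^(-α)` and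
`D = 1` iff `P[X0 = x0 | Z = z] ≥ 2^(-α/2)` (expressed multiplicatively), then
`∑ z, max_{x1} P[X1 = x1, D = 1, Z = z] ≤ 2^(-α/2)`.  Moreover the key
combinatorial fact holds: for each `z` with `P[Z = z] > 0`, the number of `x0`
with `P[X0 = x0 | Z = z] ≥ 2^(-α/2)` is at most `2^(α/2)`. -/
theorem splitting_estimate_D1
    {Ω 𝒳 𝒵 : Type} [Fintype Ω] [Fintype 𝒳] [Fintype 𝒵]
    [DecidableEq 𝒳] [DecidableEq 𝒵] [Nonempty 𝒳]
    (μ : Ω → ℝ) (hμ0 : ∀ ω, 0 ≤ μ ω) (hμ1 : ∑ ω, μ ω = 1)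
    (X0 X1 : Ω → 𝒳) (Z : Ω → 𝒵) (α : ℝ)
    (hα : ∑ z, Finset.univ.sup' Finset.univ_nonempty
        (fun p : 𝒳 × 𝒳 =>
          ∑ ω, if X0 ω = p.1 ∧ X1 ω = p.2 ∧ Z ω = z then μ ω else 0)
      ≤ (2:ℝ) ^ (-α)) :
    (∑ z, Finset.univ.sup' Finset.univ_nonempty
      (fun x1 => ∑ ω,
        if X1 ω = x1
            ∧ ((2:ℝ) ^ (-α/2) * (∑ ω', if Z ω' = Z ω then μ ω' else 0)
                ≤ ∑ ω', if X0 ω' = X0 ω ∧ Z ω' = Z ω then μ ω' else 0)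
            ∧ Z ω = z
        then μ ω else 0)
      ≤ (2:ℝ) ^ (-α/2))
    ∧
    (∀ z : 𝒵, 0 < (∑ ω, if Z ω = z then μ ω else 0) →
      ((Finset.univ.filter (fun x0 : 𝒳 =>
          (2:ℝ) ^ (-α/2) * (∑ ω, if Z ω = z then μ ω else 0)
            ≤ ∑ ω, if X0 ω = x0 ∧ Z ω = z then μ ω else 0)).card : ℝ)
        ≤ (2:ℝ) ^ (α/2)) :=
  splitting_estimate_D1_general μ hμ0 X0 X1 Z α hα
end

section
/- Classical privacy amplification (leftover hash lemma with side information): Let 𝓕 be a two-universal family of hash functions from {0,1}^n to {0,1}^ℓ, let F be uniform on 𝓕 and independent of the finite random variables (X, Y). Then d(F(X) | F, Y) <= (1/2) · 2^{-(H_min(X|Y) - ℓ)/2}, where d denotes the non-uniformity (half the statistical distance from uniform on {0,1}^ℓ jointly with the side information). -/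
/-!
Fix `y` and write `p x = P[X = x, Y = y]` (`jointWeight`) and `q f s = P[f X = s, Y = y]`
(`hashWeight`). Expanding squares, `∑_f ∑_s q f s ^ 2` counts pairs `(x, x')` weighted by the
number of `f` with `f x = f x'`; two-universality bounds this by `|ℱ| (∑ p² + (∑ p)² / |β|)`, so
the squared ℓ²-distance of `q f` from uniform, summed over `f`, is at most
`|ℱ| ∑ p² ≤ |ℱ| · max p · P[Y = y]`. Cauchy–Schwarz over `ℱ × β` turns this into the ℓ¹ bound
`|ℱ| √(|β| · max p · P[Y = y])`, and Cauchy–Schwarz over `y` gives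
`|ℱ| √(|β| ∑_y max_x P[X = x, Y = y]) = |ℱ| · 2^(-(H_min(X|Y) - ℓ)/2)`.
-/

open Finset Real

theorem Real.sum_abs_le_sqrt_card_mul_sum_sq {ι : Type*} [Fintype ι] (a : ι → ℝ) :
    ∑ i, |a i| ≤ √(Fintype.card ι * ∑ i, a i ^ 2) :=
  le_sqrt_of_sq_le <| by simpa using sq_sum_le_card_mul_sum_sq (s := univ) (f := fun i => |a i|)

theorem Real.rpow_neg_neg_logb_sub_div_two {b M : ℝ} (hb : 0 < b) (hb1 : b ≠ 1) (hM : 0 < M)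
    (t : ℝ) : b ^ (-(-logb b M - t) / 2) = √(b ^ t * M) := by
  rw [sqrt_eq_rpow, mul_rpow (rpow_nonneg hb.le t) hM.le, ← rpow_mul hb.le,
    ← rpow_logb hb hb1 hM, ← rpow_mul hb.le, ← rpow_add hb, rpow_logb hb hb1 hM]
  ring_nf

theorem Finset.sum_sq_le_sup'_mul_sum {α : Type*} [Fintype α] [Nonempty α] {p : α → ℝ}
    (hp : ∀ x, 0 ≤ p x) :
    ∑ x, p x ^ 2 ≤ univ.sup' univ_nonempty p * ∑ x, p x := by
  rw [mul_sum]
  exact sum_le_sum fun x _ => by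
    rw [sq]
    exact mul_le_mul_of_nonneg_right (le_sup' p (mem_univ x)) (hp x)

theorem Finset.sum_sup'_pos_of_sum_sum_eq_one {α 𝒴 : Type*} [Fintype α] [Nonempty α]
    [Fintype 𝒴] {p : α → 𝒴 → ℝ} (hp1 : ∑ y, ∑ x, p x y = 1) :
    0 < ∑ y, univ.sup' univ_nonempty (p · y) := by
  have : 1 ≤ (Fintype.card α : ℝ) * ∑ y, univ.sup' univ_nonempty (p · y) := by
    rw [← hp1, mul_sum]
    refine sum_le_sum fun y _ => ?_
    calc ∑ x, p x y ≤ ∑ _x : α, univ.sup' univ_nonempty (p · y) :=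
          sum_le_sum fun x _ => le_sup' (p · y) (mem_univ x)
      _ = _ := by rw [sum_const, card_univ, nsmul_eq_mul]
  exact pos_of_mul_pos_right (by linarith) (Nat.cast_nonneg _)

namespace LeftoverHash

section JointWeight

variable {Ω α 𝒴 : Type*} [Fintype Ω] [DecidableEq α] [DecidableEq 𝒴]

def jointWeight (μ : Ω → ℝ) (X : Ω → α) (Y : Ω → 𝒴) (x : α) (y : 𝒴) : ℝ :=
  ∑ ω, if X ω = x ∧ Y ω = y then μ ω else 0

variable (μ : Ω → ℝ) (X : Ω → α) (Y : Ω → 𝒴)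

theorem jointWeight_nonneg (hμ : ∀ ω, 0 ≤ μ ω) (x : α) (y : 𝒴) : 0 ≤ jointWeight μ X Y x y :=
  sum_nonneg fun ω _ => ite_nonneg (hμ ω) le_rfl

theorem sum_jointWeight_left [Fintype α] (y : 𝒴) :
    ∑ x, jointWeight μ X Y x y = ∑ ω, if Y ω = y then μ ω else 0 := by
  simp only [jointWeight]
  rw [sum_comm]
  simp [ite_and]

theorem sum_sum_jointWeight [Fintype α] [Fintype 𝒴] :
    ∑ y, ∑ x, jointWeight μ X Y x y = ∑ ω, μ ω := by
  simp only [sum_jointWeight_left]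
  rw [sum_comm]
  simp

end JointWeight

section TwoUniversal

variable {α β ℱ : Type*} [Fintype β] [DecidableEq β] [Fintype ℱ]

def IsTwoUniversal (h : ℱ → α → β) : Prop :=
  ∀ x x', x ≠ x' →
    (#{f | h f x = h f x'} : ℝ) / Fintype.card ℱ ≤ (Fintype.card β : ℝ)⁻¹

theorem IsTwoUniversal.card_collisions_le {h : ℱ → α → β} (hh : IsTwoUniversal h) {x x' : α}
    (hne : x ≠ x') :
    (#{f | h f x = h f x'} : ℝ) ≤ Fintype.card ℱ / Fintype.card β := by
  rcases eq_or_ne (Fintype.card ℱ : ℝ) 0 with hℱ | hℱ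
  · rw [hℱ, zero_div]
    exact (Nat.cast_le.mpr (card_le_univ _)).trans hℱ.le
  · rw [div_eq_mul_inv, ← div_le_iff₀' (by positivity)]
    exact hh x x' hne

end TwoUniversal

variable {α β ℱ : Type*} [Fintype α] [DecidableEq β]

def hashWeight (h : ℱ → α → β) (p : α → ℝ) (f : ℱ) (s : β) : ℝ :=
  ∑ x with h f x = s, p x

theorem hashWeight_jointWeight {Ω 𝒴 : Type*} [Fintype Ω] [DecidableEq α] [DecidableEq 𝒴]
    (h : ℱ → α → β) (μ : Ω → ℝ) (X : Ω → α) (Y : Ω → 𝒴) (f : ℱ) (s : β) (y : 𝒴) :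
    hashWeight h (jointWeight μ X Y · y) f s = jointWeight μ (h f ∘ X) Y s y := by
  simp only [hashWeight, jointWeight]
  rw [sum_comm]
  simp [ite_and]

variable [Fintype β] (h : ℱ → α → β)

section

variable (p : α → ℝ)

theorem sum_hashWeight (f : ℱ) : ∑ s, hashWeight h p f s = ∑ x, p x :=
  sum_fiberwise _ _ _

theorem sum_hashWeight_sq (f : ℱ) :
    ∑ s, hashWeight h p f s ^ 2 = ∑ x, ∑ x', if h f x = h f x' then p x * p x' else 0 := by
  simp only [hashWeight, sq, sum_mul_sum, sum_filter]
  rw [sum_comm]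
  refine sum_congr rfl fun x _ => ?_
  rw [sum_comm]
  refine sum_congr rfl fun x' _ => ?_
  simp [eq_comm]

theorem sum_sq_hashWeight_sub_mean (f : ℱ) :
    ∑ s, (hashWeight h p f s - (∑ x, p x) / Fintype.card β) ^ 2
      = ∑ s, hashWeight h p f s ^ 2 - (∑ x, p x) ^ 2 / Fintype.card β := by
  have hsum := sum_hashWeight h p f
  simp only [sub_sq, sum_add_distrib, sum_sub_distrib, ← sum_mul, ← mul_sum, hsum, sum_const,
    card_univ, nsmul_eq_mul]
  rcases eq_or_ne (Fintype.card β : ℝ) 0 with hβ | hβ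
  · simp [hβ]
  · field_simp
    ring

variable [Fintype ℱ]

theorem sum_sum_hashWeight_sq :
    ∑ f, ∑ s, hashWeight h p f s ^ 2 = ∑ x, ∑ x', #{f | h f x = h f x'} * (p x * p x') := by
  simp only [sum_hashWeight_sq]
  rw [sum_comm]
  refine sum_congr rfl fun x _ => ?_
  rw [sum_comm]
  refine sum_congr rfl fun x' _ => ?_
  rw [← sum_filter, sum_const, nsmul_eq_mul]

theorem sum_sum_hashWeight_sq_le (hh : IsTwoUniversal h) (hp : ∀ x, 0 ≤ p x) :
    ∑ f, ∑ s, hashWeight h p f s ^ 2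
      ≤ Fintype.card ℱ * ∑ x, p x ^ 2 + Fintype.card ℱ / Fintype.card β * (∑ x, p x) ^ 2 := by
  classical
  have hpair : ∀ x x', (#{f | h f x = h f x'} : ℝ) * (p x * p x')
      ≤ (if x = x' then Fintype.card ℱ * (p x * p x') else 0)
        + Fintype.card ℱ / Fintype.card β * (p x * p x') := by
    intro x x'
    have hpp : 0 ≤ p x * p x' := mul_nonneg (hp x) (hp x')
    split_ifs with hx
    · subst hx
      rw [filter_true_of_mem fun _ _ => rfl, card_univ]
      exact le_add_of_nonneg_right (by positivity)
    · rw [zero_add]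
      exact mul_le_mul_of_nonneg_right (hh.card_collisions_le hx) hpp
  rw [sum_sum_hashWeight_sq]
  refine (sum_le_sum fun x _ => sum_le_sum fun x' _ => hpair x x').trans_eq ?_
  simp [sum_add_distrib, ← mul_sum, sq, sum_mul_sum]

theorem sum_sum_sq_hashWeight_sub_mean_le (hh : IsTwoUniversal h) (hp : ∀ x, 0 ≤ p x) :
    ∑ f, ∑ s, (hashWeight h p f s - (∑ x, p x) / Fintype.card β) ^ 2
      ≤ Fintype.card ℱ * ∑ x, p x ^ 2 := by
  have hcoll := sum_sum_hashWeight_sq_le h p hh hp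
  rw [div_mul_eq_mul_div] at hcoll
  simp only [sum_sq_hashWeight_sub_mean, sum_sub_distrib, sum_const, card_univ, nsmul_eq_mul,
    mul_div_assoc']
  linarith

theorem sum_sum_abs_hashWeight_sub_mean_le (hh : IsTwoUniversal h) (hp : ∀ x, 0 ≤ p x) :
    ∑ f, ∑ s, |hashWeight h p f s - (∑ x, p x) / Fintype.card β|
      ≤ Fintype.card ℱ * √(Fintype.card β * ∑ x, p x ^ 2) := by
  calc _ = ∑ i : ℱ × β, |hashWeight h p i.1 i.2 - (∑ x, p x) / Fintype.card β| :=
        (Fintype.sum_prod_type' _).symm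
    _ ≤ √(Fintype.card (ℱ × β) * ∑ i : ℱ × β,
          (hashWeight h p i.1 i.2 - (∑ x, p x) / Fintype.card β) ^ 2) :=
        sum_abs_le_sqrt_card_mul_sum_sq _
    _ ≤ √(Fintype.card ℱ * Fintype.card β * (Fintype.card ℱ * ∑ x, p x ^ 2)) := by
        rw [Fintype.sum_prod_type, Fintype.card_prod, Nat.cast_mul]
        gcongr
        exact sum_sum_sq_hashWeight_sub_mean_le h p hh hp
    _ = Fintype.card ℱ * √(Fintype.card β * ∑ x, p x ^ 2) := by
        rw [show (Fintype.card ℱ * Fintype.card β * (Fintype.card ℱ * ∑ x, p x ^ 2) : ℝ)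
          = (Fintype.card ℱ : ℝ) ^ 2 * (Fintype.card β * ∑ x, p x ^ 2) by ring,
          sqrt_mul (by positivity), sqrt_sq (by positivity)]

end

variable [Fintype ℱ]

theorem sum_sum_sum_abs_hashWeight_sub_mean_le [Nonempty α] {𝒴 : Type*} [Fintype 𝒴]
    (p : α → 𝒴 → ℝ) (hp : ∀ x y, 0 ≤ p x y) (hp1 : ∑ y, ∑ x, p x y = 1)
    (hh : IsTwoUniversal h) :
    ∑ y, ∑ f, ∑ s, |hashWeight h (p · y) f s - (∑ x, p x y) / Fintype.card β|
      ≤ Fintype.card ℱ * √(Fintype.card β * ∑ y, univ.sup' univ_nonempty (p · y)) := by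
  set m : 𝒴 → ℝ := fun y => univ.sup' univ_nonempty (p · y)
  have hm : ∀ y, 0 ≤ m y := fun y =>
    (hp (Classical.arbitrary α) y).trans (le_sup' (p · y) (mem_univ _))
  calc _ ≤ ∑ y, Fintype.card ℱ * √(Fintype.card β * ∑ x, p x y ^ 2) :=
        sum_le_sum fun y _ => sum_sum_abs_hashWeight_sub_mean_le h (p · y) hh (hp · y)
    _ ≤ ∑ y, Fintype.card ℱ * (√(Fintype.card β * m y) * √(∑ x, p x y)) := by
        gcongr with y
        rw [← sqrt_mul (by positivity [hm y]), mul_assoc]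
        gcongr
        exact sum_sq_le_sup'_mul_sum (hp · y)
    _ ≤ Fintype.card ℱ * (√(∑ y, Fintype.card β * m y) * √(∑ y, ∑ x, p x y)) := by
        rw [← mul_sum]
        gcongr
        exact sum_sqrt_mul_sqrt_le _ (fun y => by positivity [hm y])
          (fun y => sum_nonneg fun x _ => hp x y)
    _ = Fintype.card ℱ * √(Fintype.card β * ∑ y, m y) := by
        rw [hp1, sqrt_one, mul_one, ← mul_sum]

theorem sum_abs_jointWeight_hash_sub_uniform_le [Nonempty α] [Nonempty ℱ] {Ω 𝒴 : Type*}
    [Fintype Ω] [Fintype 𝒴] [DecidableEq α] [DecidableEq 𝒴] (μ : Ω → ℝ) (hμ0 : ∀ ω, 0 ≤ μ ω)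
    (hμ1 : ∑ ω, μ ω = 1) (X : Ω → α) (Y : Ω → 𝒴) (hh : IsTwoUniversal h) :
    ∑ s, ∑ f, ∑ y, |jointWeight μ (h f ∘ X) Y s y / Fintype.card ℱ
        - (Fintype.card β : ℝ)⁻¹ * ((∑ ω, if Y ω = y then μ ω else 0) / Fintype.card ℱ)|
      ≤ √(Fintype.card β * ∑ y, univ.sup' univ_nonempty (jointWeight μ X Y · y)) := by
  set N : ℝ := (Fintype.card ℱ : ℝ)
  set p := jointWeight μ X Y
  have hN : 0 < N := by positivity
  have hterm : ∀ s f y,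
      |jointWeight μ (h f ∘ X) Y s y / N
          - (Fintype.card β : ℝ)⁻¹ * ((∑ ω, if Y ω = y then μ ω else 0) / N)|
        = |hashWeight h (p · y) f s - (∑ x, p x y) / Fintype.card β| / N := by
    intro s f y
    rw [hashWeight_jointWeight, sum_jointWeight_left, mul_div_assoc', div_sub_div_same,
      abs_div, abs_of_pos hN, inv_mul_eq_div]
  calc _ = (∑ y, ∑ f, ∑ s, |hashWeight h (p · y) f s - (∑ x, p x y) / Fintype.card β|) / N := by
        simp only [hterm, ← sum_div]
        rw [sum_comm_cycle]
        exact congrArg (· / N) (sum_congr rfl fun y _ => sum_comm)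
    _ ≤ N * √(Fintype.card β * ∑ y, univ.sup' univ_nonempty (p · y)) / N := by
        gcongr
        exact sum_sum_sum_abs_hashWeight_sub_mean_le h p (jointWeight_nonneg μ X Y hμ0)
          ((sum_sum_jointWeight μ X Y).trans hμ1) hh
    _ = _ := mul_div_cancel_left₀ _ hN.ne'

end LeftoverHash

/-- Classical privacy amplification (leftover hash lemma with
side information).  `𝓕` is a two-universal family of hash functions from
`{0,1}^n` to `{0,1}^ℓ`, `F` is uniform on `𝓕` and independent of `(X, Y)`
(modeled by the product space `Ω × ℱ` with product weights `μ ω / |ℱ|`).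
Then `d(F(X) | F, Y) ≤ (1/2) · 2^(-(H_min(X|Y) - ℓ)/2)`. -/
theorem privacy_amplification
    {Ω 𝒴 ℱ : Type} [Fintype Ω] [Fintype 𝒴] [Fintype ℱ]
    [DecidableEq 𝒴] [Nonempty ℱ]
    (n ℓ : ℕ)
    (μ : Ω → ℝ) (hμ0 : ∀ ω, 0 ≤ μ ω) (hμ1 : ∑ ω, μ ω = 1)
    (X : Ω → (Fin n → Bool)) (Y : Ω → 𝒴)
    (h : ℱ → (Fin n → Bool) → (Fin ℓ → Bool))
    -- two-universality of the family
    (huniv : ∀ x y : Fin n → Bool, x ≠ y →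
      ((Finset.univ.filter (fun f : ℱ => h f x = h f y)).card : ℝ)
          / (Fintype.card ℱ : ℝ)
        ≤ (2:ℝ) ^ (-(ℓ:ℝ))) :
    (1/2) * ∑ s : Fin ℓ → Bool, ∑ f : ℱ, ∑ y : 𝒴,
        |(∑ ω, if h f (X ω) = s ∧ Y ω = y then μ ω else 0) / (Fintype.card ℱ : ℝ)
          - (2:ℝ) ^ (-(ℓ:ℝ))
            * ((∑ ω, if Y ω = y then μ ω else 0) / (Fintype.card ℱ : ℝ))|
      ≤ (1/2) * (2:ℝ) ^
          (-((-Real.logb 2 (∑ y : 𝒴, Finset.univ.sup' Finset.univ_nonempty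
                (fun x : Fin n → Bool =>
                  ∑ ω, if X ω = x ∧ Y ω = y then μ ω else 0)))
              - (ℓ:ℝ)) / 2) := by
  open LeftoverHash in
  have hβ : (Fintype.card (Fin ℓ → Bool) : ℝ) = 2 ^ (ℓ : ℝ) := by simp
  have hc : (2 : ℝ) ^ (-(ℓ : ℝ)) = (Fintype.card (Fin ℓ → Bool) : ℝ)⁻¹ := by
    rw [hβ, rpow_neg zero_le_two]
  have hM := sum_sup'_pos_of_sum_sum_eq_one ((sum_sum_jointWeight μ X Y).trans hμ1)
  rw [hc]
  calc _ ≤ (1/2) * √(Fintype.card (Fin ℓ → Bool) * ∑ y, univ.sup' univ_nonempty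
          (jointWeight μ X Y · y)) := by
        gcongr
        exact sum_abs_jointWeight_hash_sub_uniform_le h μ hμ0 hμ1 X Y
          fun x x' hne => hc ▸ huniv x x' hne
    _ = _ := by
        rw [hβ, ← rpow_neg_neg_logb_sub_div_two two_pos (by norm_num) hM]
        rfl
end

section
/- Smooth chain rule: for finite random variables X, Y, Z and any ε >= 0, H_min^ε(X | Y, Z) >= H_min^ε(X | Z) - log2 |𝒴|. -/
open Finset Real

/-- Guessing probability of `X` given `Y`, restricted to the event `E`. -/
noncomputable def pguessEvent {Ω 𝒳 𝒴 : Type} [Fintype Ω] [Fintype 𝒳] [Fintype 𝒴]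
    [DecidableEq 𝒳] [DecidableEq 𝒴] [Nonempty 𝒳]
    (μ : Ω → ℝ) (X : Ω → 𝒳) (Y : Ω → 𝒴) (E : Finset Ω) : ℝ :=
  ∑ y, Finset.univ.sup' Finset.univ_nonempty
    (fun x => ∑ ω ∈ E, if X ω = x ∧ Y ω = y then μ ω else 0)

/-- Conditional `ε`-smooth min-entropy. -/
noncomputable def smoothHmin {Ω 𝒳 𝒴 : Type} [Fintype Ω] [Fintype 𝒳] [Fintype 𝒴]
    [DecidableEq 𝒳] [DecidableEq 𝒴] [Nonempty 𝒳]
    (μ : Ω → ℝ) (X : Ω → 𝒳) (Y : Ω → 𝒴) (ε : ℝ) : ℝ :=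
  sSup {r : ℝ | ∃ E : Finset Ω,
    1 - ε ≤ (∑ ω ∈ E, μ ω) ∧ r = -Real.logb 2 (pguessEvent μ X Y E)}


/-! Both smooth entropies are suprema over the same events `E`, so it suffices to compare the
guessing probabilities event by event: guessing `X` from `(Y, Z)` is at least as easy as from `Z`
alone, and at most `|𝒴|` times easier, since `P[X = x, Y = y, Z = z, E] ≤ P[X = x, Z = z, E]` for
each of the `|𝒴|` values `y`. -/

lemma pguessEvent_nonneg {Ω 𝒳 𝒴 : Type} [Fintype Ω] [Fintype 𝒳] [Fintype 𝒴]
    [DecidableEq 𝒳] [DecidableEq 𝒴] [Nonempty 𝒳]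
    {μ : Ω → ℝ} (hμ : ∀ ω, 0 ≤ μ ω) (X : Ω → 𝒳) (Y : Ω → 𝒴) (E : Finset Ω) :
    0 ≤ pguessEvent μ X Y E := by
  refine sum_nonneg fun y _ => ?_
  obtain ⟨x⟩ := ‹Nonempty 𝒳›
  refine le_trans ?_ (le_sup' _ (mem_univ x))
  exact sum_nonneg fun ω _ => by split_ifs <;> simp [hμ]

lemma pguessEvent_comp_le {Ω 𝒳 𝒴 𝒵 : Type} [Fintype Ω] [Fintype 𝒳] [Fintype 𝒴] [Fintype 𝒵]
    [DecidableEq 𝒳] [DecidableEq 𝒴] [DecidableEq 𝒵] [Nonempty 𝒳]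
    (μ : Ω → ℝ) (X : Ω → 𝒳) (Y : Ω → 𝒴) (g : 𝒴 → 𝒵) (E : Finset Ω) :
    pguessEvent μ X (g ∘ Y) E ≤ pguessEvent μ X Y E := by
  have fiber_sum : ∀ x z, (∑ ω ∈ E, if X ω = x ∧ g (Y ω) = z then μ ω else 0)
      = ∑ y with g y = z, ∑ ω ∈ E, if X ω = x ∧ Y ω = y then μ ω else 0 := by
    intro x z
    rw [sum_comm]
    refine sum_congr rfl fun ω _ => ?_
    by_cases hx : X ω = x <;> simp [hx]
  unfold pguessEvent
  rw [← sum_fiberwise univ g]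
  refine sum_le_sum fun z _ => sup'_le _ _ fun x _ => ?_
  simp only [Function.comp_apply, fiber_sum]
  exact sum_le_sum fun y _ => le_sup' (fun x => ∑ ω ∈ E, if X ω = x ∧ Y ω = y then μ ω else 0)
    (mem_univ x)

lemma pguessEvent_prod_le_card_mul {Ω 𝒳 𝒴 𝒵 : Type} [Fintype Ω] [Fintype 𝒳] [Fintype 𝒴]
    [Fintype 𝒵] [DecidableEq 𝒳] [DecidableEq 𝒴] [DecidableEq 𝒵] [Nonempty 𝒳]
    {μ : Ω → ℝ} (hμ : ∀ ω, 0 ≤ μ ω) (X : Ω → 𝒳) (Y : Ω → 𝒴) (Z : Ω → 𝒵) (E : Finset Ω) :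
    pguessEvent μ X (fun ω => (Y ω, Z ω)) E ≤ Fintype.card 𝒴 * pguessEvent μ X Z E := by
  unfold pguessEvent
  rw [Fintype.sum_prod_type, ← nsmul_eq_mul, ← card_univ, ← sum_const]
  refine sum_le_sum fun y _ => sum_le_sum fun z _ => sup'_mono_fun fun x _ => ?_
  refine sum_le_sum fun ω _ => ?_
  split_ifs with hyz hz
  · exact le_rfl
  · exact absurd ⟨hyz.1, congrArg Prod.snd hyz.2⟩ hz
  · exact hμ ω
  · exact le_rfl

lemma logb_natCast_nonneg {b : ℝ} (hb : 1 ≤ b) (n : ℕ) : 0 ≤ logb b n :=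
  div_nonneg (log_natCast_nonneg n) (log_nonneg hb)

lemma logb_le_logb_add_logb_natCast {b p q : ℝ} {n : ℕ} (hb : 1 < b) (hp : 0 ≤ p)
    (hpq : p ≤ q) (hqn : q ≤ n * p) : logb b q ≤ logb b p + logb b n := by
  rcases hp.eq_or_lt with rfl | hp
  -- `logb b 0 = 0`, so `logb b q` must vanish too, whence the hypothesis `p ≤ q`
  · obtain rfl : q = 0 := le_antisymm (by simpa using hqn) hpq
    simpa using logb_natCast_nonneg hb.le n
  · have hq : 0 < q := hp.trans_le hpq
    have hn : (0 : ℝ) < n := pos_of_mul_pos_left (hq.trans_le hqn) hp.le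
    calc logb b q ≤ logb b (n * p) := logb_le_logb_of_le hb hq hqn
      _ = logb b p + logb b n := by rw [logb_mul hn.ne' hp.ne', add_comm]

lemma csSup_image_sub_le_csSup_image {ι : Type*} {s : Set ι} {f g : ι → ℝ} {c : ℝ}
    (hs : s.Finite) (hc : 0 ≤ c) (h : ∀ i ∈ s, g i - c ≤ f i) :
    sSup (g '' s) - c ≤ sSup (f '' s) := by
  rcases s.eq_empty_or_nonempty with rfl | hne
  · simpa using hc
  rw [sub_le_iff_le_add]
  refine csSup_le (hne.image g) ?_
  rintro _ ⟨i, hi, rfl⟩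
  have := le_csSup (hs.image f).bddAbove (Set.mem_image_of_mem f hi)
  linarith [h i hi]

lemma smoothHmin_eq_sSup_image {Ω 𝒳 𝒴 : Type} [Fintype Ω] [Fintype 𝒳] [Fintype 𝒴]
    [DecidableEq 𝒳] [DecidableEq 𝒴] [Nonempty 𝒳]
    (μ : Ω → ℝ) (X : Ω → 𝒳) (Y : Ω → 𝒴) (ε : ℝ) :
    smoothHmin μ X Y ε = sSup ((fun E => -logb 2 (pguessEvent μ X Y E)) ''
      {E | 1 - ε ≤ ∑ ω ∈ E, μ ω}) := by
  simp only [smoothHmin, Set.image, Set.mem_ofPred_eq, eq_comm]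

theorem smooth_min_entropy_chain_rule_general
    {Ω 𝒳 𝒴 𝒵 : Type} [Fintype Ω] [Fintype 𝒳] [Fintype 𝒴] [Fintype 𝒵]
    [DecidableEq 𝒳] [DecidableEq 𝒴] [DecidableEq 𝒵] [Nonempty 𝒳]
    (μ : Ω → ℝ) (hμ0 : ∀ ω, 0 ≤ μ ω)
    (X : Ω → 𝒳) (Y : Ω → 𝒴) (Z : Ω → 𝒵) (ε : ℝ) :
    smoothHmin μ X (fun ω => (Y ω, Z ω)) ε
      ≥ smoothHmin μ X Z ε - Real.logb 2 (Fintype.card 𝒴) := by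
  rw [ge_iff_le, smoothHmin_eq_sSup_image, smoothHmin_eq_sSup_image]
  refine csSup_image_sub_le_csSup_image (Set.toFinite _)
    (logb_natCast_nonneg one_le_two _) fun E _ => ?_
  have := logb_le_logb_add_logb_natCast one_lt_two (pguessEvent_nonneg hμ0 X Z E)
    (pguessEvent_comp_le μ X (fun ω => (Y ω, Z ω)) Prod.snd E)
    (pguessEvent_prod_le_card_mul hμ0 X Y Z E)
  linarith

/-- Smooth chain rule:
`H_min^ε(X | Y, Z) ≥ H_min^ε(X | Z) - log2 |𝒴|`. -/
theorem smooth_min_entropy_chain_rule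
    {Ω 𝒳 𝒴 𝒵 : Type} [Fintype Ω] [Fintype 𝒳] [Fintype 𝒴] [Fintype 𝒵]
    [DecidableEq 𝒳] [DecidableEq 𝒴] [DecidableEq 𝒵] [Nonempty 𝒳]
    (μ : Ω → ℝ) (hμ0 : ∀ ω, 0 ≤ μ ω) (hμ1 : ∑ ω, μ ω = 1)
    (X : Ω → 𝒳) (Y : Ω → 𝒴) (Z : Ω → 𝒵) (ε : ℝ) (hε : 0 ≤ ε) :
    smoothHmin μ X (fun ω => (Y ω, Z ω)) ε
      ≥ smoothHmin μ X Z ε - Real.logb 2 (Fintype.card 𝒴) :=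
  smooth_min_entropy_chain_rule_general μ hμ0 X Y Z ε
end
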